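/- Let f : A → B be a function, φ a channel, Enc : A → RandomVariables(X), Dec : Y → RandomVariables(B). If Dec ∘ φ ∘ Enc is an edge-bijective λ-locally homomorphic channel from H_f to the complete 1-uniform hypergraph on f(A), then there exists an edge-bijective homomorphism g on the complete 1-uniform hypergraph on f(A) such that (Enc, g ∘ Dec) is an (f, φ, λ)-code. -/

import Mathlib

open scoped ENNReal

/-- A hypergraph: a vertex set together with a set of edges, each a subset of the vertices. -/
structure Hypergraph' (V : Type*) where
  verts : Set V
  edges : Set (Set V)
  edge_sub : ∀ e ∈ edges, e ⊆ verts

/-- A partition hypergraph: the (nonempty) edges partition the vertex set. -/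
def Hypergraph'.IsPartition {V : Type*} (G : Hypergraph' V) : Prop :=
  (∀ v ∈ G.verts, ∃! e, e ∈ G.edges ∧ v ∈ e) ∧ ∀ e ∈ G.edges, e.Nonempty

/-- `f` is a hypergraph homomorphism `G → H` with edge map `fE`. -/
def IsHom {α β : Type*} (G : Hypergraph' α) (H : Hypergraph' β)
    (f : α → β) (fE : Set α → Set β) : Prop :=
  (∀ e ∈ G.edges, fE e ∈ H.edges) ∧ ∀ e ∈ G.edges, f '' e ⊆ fE e

/-- Probability that the random variable with law `p` lands in `S`. -/
noncomputable def prob {β : Type*} (p : PMF β) (S : Set β) : ℝ≥0∞ :=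
  p.toOuterMeasure S

/-- `φ` is a λ-locally homomorphic channel between partition hypergraphs,
with edge map `fE` and error bounds `err` indexed by edges of `G`. -/
def IsLHC {α β : Type*} (G : Hypergraph' α) (H : Hypergraph' β)
    (φ : α → PMF β) (fE : Set α → Set β) (err : Set α → ℝ≥0∞) : Prop :=
  (∀ e ∈ G.edges, fE e ∈ H.edges) ∧
  ∀ a, ∀ e ∈ G.edges, a ∈ e → 1 - err e ≤ prob (φ a) (fE e)

/-- The characteristic hypergraph of a function `f : A → C`. -/
def charHypergraph {A C : Type*} (f : A → C) : Hypergraph' A where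
  verts := Set.univ
  edges := {e | ∃ c ∈ Set.range f, e = f ⁻¹' {c}}
  edge_sub := fun _ _ => Set.subset_univ _

/-- The complete 1-uniform hypergraph on a vertex set `S`. -/
def complete1 {C : Type*} (S : Set C) : Hypergraph' C where
  verts := S
  edges := {e | ∃ c ∈ S, e = {c}}
  edge_sub := by rintro e ⟨c, hc, rfl⟩; simpa

/-- The end-to-end channel `Dec ∘ φ ∘ Enc` of a (possibly stochastic) code. -/
noncomputable def comp3 {A X Y B : Type*} (Enc : A → PMF X) (φ : X → PMF Y)
    (Dec : Y → PMF B) (a : A) : PMF B :=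
  (Enc a).bind fun x => (φ x).bind Dec

/-- `(Enc, Dec)` is an `(f, φ, λ)`-code; the error bound of the message `a` is
indexed by the edge `f⁻¹{f a}` of `H_f` (equivalently, by `f a ∈ f(A)`). -/
def IsCode {A X Y B : Type*} (f : A → B) (φ : X → PMF Y)
    (Enc : A → PMF X) (Dec : Y → PMF B) (err : Set A → ℝ≥0∞) : Prop :=
  ∀ a : A, 1 - err (f ⁻¹' {f a}) ≤ prob (comp3 Enc φ Dec a) {f a}


/-- if `Dec ∘ φ ∘ Enc` is an edge-bijective λ-LHC from `H_f` to the
complete 1-uniform hypergraph on `f(A)`, then there is an edge-bijective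
homomorphism `g` of `f(A)¹` such that `(Enc, g ∘ Dec)` is an `(f, φ, λ)`-code. -/
theorem stmt6 {A X Y B : Type*} (f : A → B) (φ : X → PMF Y)
    (Enc : A → PMF X) (Dec : Y → PMF B)
    (fE : Set A → Set B) (err : Set A → ℝ≥0∞)
    (hlhc : IsLHC (charHypergraph f) (complete1 (Set.range f))
      (comp3 Enc φ Dec) fE err)
    (hbij : Set.BijOn fE (charHypergraph f).edges (complete1 (Set.range f)).edges) :
    ∃ (g : B → B) (gE : Set B → Set B),
      IsHom (complete1 (Set.range f)) (complete1 (Set.range f)) g gE ∧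
      Set.BijOn gE (complete1 (Set.range f)).edges (complete1 (Set.range f)).edges ∧
      IsCode f φ Enc (fun y => (Dec y).map g) err := by
  classical
  obtain ⟨hE, hprob⟩ := hlhc
  have hedge : ∀ a : A, f ⁻¹' {f a} ∈ (charHypergraph f).edges :=
    fun a => ⟨f a, ⟨a, rfl⟩, rfl⟩
  set g : B → B := fun b =>
    if h : ∃ b' ∈ Set.range f, fE (f ⁻¹' {b'}) = {b} then h.choose else b with hg
  -- key: if fE (f ⁻¹' {f a}) = {c} then g c = f a
  have hkey : ∀ (a : A) (c : B), fE (f ⁻¹' {f a}) = {c} → g c = f a := by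
    intro a c hc
    have hex : ∃ b' ∈ Set.range f, fE (f ⁻¹' {b'}) = {c} := ⟨f a, ⟨a, rfl⟩, hc⟩
    have hgc : g c = hex.choose := by rw [hg]; exact dif_pos hex
    obtain ⟨hmem, heq⟩ := hex.choose_spec
    have hpe : f ⁻¹' {hex.choose} = f ⁻¹' {f a} := by
      apply hbij.injOn ⟨hex.choose, hmem, rfl⟩ (hedge a)
      rw [heq, hc]
    have ha : a ∈ f ⁻¹' {hex.choose} := by rw [hpe]; exact rfl
    have : f a = hex.choose := ha
    rw [hgc, ← this]
  -- for each a, fE (f⁻¹{f a}) is a singleton {c} with c ∈ range f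
  have hsing : ∀ a : A, ∃ c ∈ Set.range f, fE (f ⁻¹' {f a}) = {c} :=
    fun a => hE _ (hedge a)
  -- for b ∈ range f: g b ∈ range f and fE (f⁻¹{g b}) = {b}
  have hginv : ∀ b ∈ Set.range f, g b ∈ Set.range f ∧ fE (f ⁻¹' {g b}) = {b} := by
    intro b hb
    obtain ⟨e, he, hfe⟩ := hbij.surjOn (⟨b, hb, rfl⟩ :
      ({b} : Set B) ∈ (complete1 (Set.range f)).edges)
    obtain ⟨b', hb', rfl⟩ := he
    have hex : ∃ b'' ∈ Set.range f, fE (f ⁻¹' {b''}) = {b} := ⟨b', hb', hfe⟩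
    have hgb : g b = hex.choose := by rw [hg]; exact dif_pos hex
    obtain ⟨hmem, heq⟩ := hex.choose_spec
    exact ⟨hgb ▸ hmem, hgb ▸ heq⟩
  refine ⟨g, fun e => g '' e, ?_, ?_, ?_⟩
  · refine ⟨?_, fun e _ => subset_rfl⟩
    rintro e ⟨c, hc, rfl⟩
    exact ⟨g c, (hginv c hc).1, by beta_reduce; rw [Set.image_singleton]⟩
  · refine ⟨?_, ?_, ?_⟩
    · rintro e ⟨c, hc, rfl⟩
      exact ⟨g c, (hginv c hc).1, by beta_reduce; rw [Set.image_singleton]⟩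
    · rintro e1 ⟨c1, hc1, rfl⟩ e2 ⟨c2, hc2, rfl⟩ him
      beta_reduce at him
      rw [Set.image_singleton, Set.image_singleton] at him
      have hgc : g c1 = g c2 := Set.singleton_eq_singleton_iff.mp him
      have h1 := (hginv c1 hc1).2
      have h2 := (hginv c2 hc2).2
      rw [← h1, ← h2, hgc]
    · rintro e ⟨c, ⟨a, rfl⟩, rfl⟩
      obtain ⟨c', hc', hceq⟩ := hsing a
      refine ⟨{c'}, ⟨c', hc', rfl⟩, ?_⟩
      beta_reduce
      rw [Set.image_singleton, hkey a c' hceq]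
  · intro a
    obtain ⟨c, hc, hceq⟩ := hsing a
    have hbound := hprob a _ (hedge a) rfl
    have hcomp : comp3 Enc φ (fun y => (Dec y).map g) a = (comp3 Enc φ Dec a).map g := by
      simp only [comp3, PMF.map_bind]
    calc 1 - err (f ⁻¹' {f a}) ≤ prob (comp3 Enc φ Dec a) (fE (f ⁻¹' {f a})) := hbound
      _ = (comp3 Enc φ Dec a).toOuterMeasure {c} := by rw [prob, hceq]
      _ ≤ (comp3 Enc φ Dec a).toOuterMeasure (g ⁻¹' {f a}) := by
          apply (comp3 Enc φ Dec a).toOuterMeasure.mono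
          intro x hx
          rw [Set.mem_singleton_iff] at hx
          simp only [Set.mem_preimage, hx, Set.mem_singleton_iff]
          exact hkey a c hceq
      _ = prob (comp3 Enc φ (fun y => (Dec y).map g) a) {f a} := by
          rw [prob, hcomp, PMF.toOuterMeasure_map_apply]
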